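/- arXiv:0801.4851 — 3 statements merged into one kernel-verified Lean document; each statement's English description precedes it below -/
import Mathlib

section
/- In any max game the price of stability equals 1: there exists a Nash-routing p whose social cost SC(p) = max(C(p), D(p)) equals the minimum of SC(p') over all routings p'. -/
/-!
Order the routings lexicographically by social cost and then by the potential
`∑ᵢ (N + 1) ^ pcᵢ(p)`, and take a minimal routing. It is socially optimal. It is also a
Nash-routing: when a player lowers its cost from `c` to `c' < c`, every other player's cost
rises to at most `c'`, so the social cost does not increase, while the potential drops because
the `N` terms `(N + 1) ^ c'` together weigh less than `(N + 1) ^ c`.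
-/


open Finset

/-- A routing game: a finite set of players `Fin N`, a graph `G` on the finite
vertex type `V`, and for each player a nonempty finite strategy set of paths
(trails of length at least 1) joining its source to its destination. -/
structure RoutingGame (V : Type) [Fintype V] [DecidableEq V] where
  /-- the underlying graph -/
  G : SimpleGraph V
  /-- the number of players -/
  N : ℕ
  Npos : 0 < N
  /-- the source of each player -/
  src : Fin N → V
  /-- the destination of each player -/
  dst : Fin N → V
  src_ne_dst : ∀ i, src i ≠ dst i
  /-- the strategy set of each player -/
  strat : ∀ i : Fin N, Finset (G.Walk (src i) (dst i))
  strat_nonempty : ∀ i, (strat i).Nonempty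
  strat_trail : ∀ i, ∀ q ∈ strat i, q.IsTrail
  strat_len : ∀ i, ∀ q ∈ strat i, 1 ≤ q.length

namespace RoutingGame

variable {V : Type} [Fintype V] [DecidableEq V] (R : RoutingGame V)

/-- A routing assigns to each player a walk from its source to its destination. -/
abbrev Routing := ∀ i : Fin R.N, R.G.Walk (R.src i) (R.dst i)

/-- `p` is a valid routing if every player's path belongs to its strategy set. -/
def IsRouting (p : R.Routing) : Prop := ∀ i, p i ∈ R.strat i

/-- The edge congestion `C_e(p)`: the number of players whose path uses `e`. -/
def edgeCong (p : R.Routing) (e : Sym2 V) : ℕ :=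
  (Finset.univ.filter fun i => e ∈ (p i).edges).card

/-- The path congestion `C_i(p)` of player `i`. -/
def pathCong (p : R.Routing) (i : Fin R.N) : ℕ :=
  (p i).edges.toFinset.sup (R.edgeCong p)

/-- The network congestion `C(p)`. -/
def netCong (p : R.Routing) : ℕ :=
  Finset.univ.sup (R.edgeCong p)

/-- The maximum path length `D(p)`. -/
def maxLen (p : R.Routing) : ℕ :=
  Finset.univ.sup fun i => (p i).length

/-- The longest path length `L` over all strategy sets. -/
def Lmax : ℕ :=
  Finset.univ.sup fun i : Fin R.N => (R.strat i).sup fun q => q.length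

/-- Player cost in the max game: `pc_i(p) = max (C_i(p)) (D_i(p))`. -/
def pcMax (p : R.Routing) (i : Fin R.N) : ℕ :=
  max (R.pathCong p i) (p i).length

/-- Social cost in the max game: `SC(p) = max (C(p)) (D(p))`. -/
def SCMax (p : R.Routing) : ℕ := max (R.netCong p) (R.maxLen p)

/-- A Nash-routing of the max game: a routing in which every player is locally
optimal. -/
def NashMax (p : R.Routing) : Prop :=
  R.IsRouting p ∧
    ∀ i, ∀ q ∈ R.strat i, R.pcMax p i ≤ R.pcMax (Function.update p i q) i

/-- A greedy move in the max game takes `p` to `p'` by letting a single player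
switch to a strictly cheaper path in its strategy set. -/
def GreedyMoveMax (p p' : R.Routing) : Prop :=
  ∃ i, ∃ q ∈ R.strat i,
    p' = Function.update p i q ∧ R.pcMax p' i < R.pcMax p i

/-- The entry `m_k(p)` of the routing vector of the max game: the number of
players with path congestion `k` plus the number of players with path length `k`. -/
def mvecMax (p : R.Routing) (k : ℕ) : ℕ :=
  (Finset.univ.filter fun i => R.pathCong p i = k).card +
    (Finset.univ.filter fun i => (p i).length = k).card

/-- The strict order on routing vectors (max game): `M(p') < M(p)` iff the
vectors agree above some index `j` and the entry of `p'` at `j` is smaller. -/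
def MLtMax (p' p : R.Routing) : Prop :=
  ∃ j : ℕ, (∀ k, j < k → R.mvecMax p' k = R.mvecMax p k) ∧
    R.mvecMax p' j < R.mvecMax p j

open Function

theorem _root_.Nat.sum_pow_lt_sum_pow_of_lt_of_le_max {ι : Type*} [Fintype ι] [DecidableEq ι]
    {B : ℕ} (hB : Fintype.card ι < B) {f g : ι → ℕ} {i : ι} (hi : g i < f i)
    (hg : ∀ j ≠ i, g j ≤ max (f j) (g i)) :
    ∑ j, B ^ g j < ∑ j, B ^ f j := by
  have hB1 : 1 ≤ B := by omega
  have hother : ∀ j ∈ univ.erase i, B ^ g j ≤ B ^ f j + B ^ g i := fun j hj => by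
    have := Nat.pow_le_pow_right hB1 (hg j (ne_of_mem_erase hj))
    rcases max_cases (f j) (g i) with ⟨h, _⟩ | ⟨h, _⟩ <;> rw [h] at this <;> omega
  have hcard : (univ.erase i).card + 1 = Fintype.card ι := card_erase_add_one (mem_univ i)
  calc ∑ j, B ^ g j = ∑ j ∈ univ.erase i, B ^ g j + B ^ g i :=
        (sum_erase_add _ _ (mem_univ i)).symm
    _ ≤ ∑ j ∈ univ.erase i, (B ^ f j + B ^ g i) + B ^ g i := by
      gcongr with j hj; exact hother j hj
    _ = ∑ j ∈ univ.erase i, B ^ f j + Fintype.card ι * B ^ g i := by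
      rw [sum_add_distrib, sum_const, smul_eq_mul, ← hcard]; ring
    _ < ∑ j ∈ univ.erase i, B ^ f j + B ^ (g i + 1) := by
      rw [pow_succ, mul_comm _ B]
      exact Nat.add_lt_add_left (Nat.mul_lt_mul_of_pos_right hB (by positivity)) _
    _ ≤ ∑ j ∈ univ.erase i, B ^ f j + B ^ f i :=
      Nat.add_le_add_left (Nat.pow_le_pow_right hB1 hi) _
    _ = ∑ j, B ^ f j := sum_erase_add _ _ (mem_univ i)

def potential (p : R.Routing) : ℕ := ∑ i, (R.N + 1) ^ R.pcMax p i

variable {R}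

lemma pathCong_le_netCong (p : R.Routing) (i : Fin R.N) : R.pathCong p i ≤ R.netCong p :=
  sup_mono (subset_univ _)

lemma pcMax_le_SCMax (p : R.Routing) (i : Fin R.N) : R.pcMax p i ≤ R.SCMax p :=
  max_le_max (pathCong_le_netCong p i) (le_sup (f := fun i => (p i).length) (mem_univ i))

section Deviation

variable (p : R.Routing) (i : Fin R.N) (q : R.G.Walk (R.src i) (R.dst i))

lemma isRouting_update (hp : R.IsRouting p) (hq : q ∈ R.strat i) :
    R.IsRouting (update p i q) := by
  intro j
  rcases eq_or_ne j i with rfl | hji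
  · rwa [update_self]
  · rw [update_of_ne hji]; exact hp j

lemma edgeCong_update_le (e : Sym2 V) :
    R.edgeCong (update p i q) e ≤ max (R.edgeCong p e) (R.pathCong (update p i q) i) := by
  by_cases he : e ∈ q.edges
  · exact le_max_of_le_right (le_sup (f := R.edgeCong _) (by simpa using he))
  · refine le_max_of_le_left (card_le_card fun j hj => ?_)
    simp only [mem_filter, mem_univ, true_and] at hj ⊢
    rcases eq_or_ne j i with rfl | hji
    · simp [he] at hj
    · rwa [update_of_ne hji] at hj

lemma pcMax_update_le {j : Fin R.N} (hji : j ≠ i) :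
    R.pcMax (update p i q) j ≤ max (R.pcMax p j) (R.pcMax (update p i q) i) := by
  have hpath : R.pathCong (update p i q) j ≤
      max (R.pathCong p j) (R.pathCong (update p i q) i) := by
    unfold pathCong
    rw [update_of_ne hji]
    exact Finset.sup_le fun e he =>
      (edgeCong_update_le p i q e).trans (max_le_max (le_sup he) le_rfl)
  unfold pcMax
  rw [update_of_ne hji]
  omega

lemma SCMax_update_le (hlt : R.pcMax (update p i q) i < R.pcMax p i) :
    R.SCMax (update p i q) ≤ R.SCMax p := by
  have hnet : R.netCong (update p i q) ≤ max (R.netCong p) (R.pathCong (update p i q) i) :=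
    Finset.sup_le fun e _ =>
      (edgeCong_update_le p i q e).trans (max_le_max (le_sup (mem_univ e)) le_rfl)
  have hlen : R.maxLen (update p i q) ≤ max (R.maxLen p) (update p i q i).length :=
    Finset.sup_le fun j _ => by
      rcases eq_or_ne j i with rfl | hji
      · exact le_max_right _ _
      · rw [update_of_ne hji]
        exact le_max_of_le_left (le_sup (f := fun j => (p j).length) (mem_univ j))
  have := pcMax_le_SCMax p i
  unfold SCMax pcMax at *
  omega

lemma potential_update_lt (hlt : R.pcMax (update p i q) i < R.pcMax p i) :
    R.potential (update p i q) < R.potential p :=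
  Nat.sum_pow_lt_sum_pow_of_lt_of_le_max (by simp) hlt fun _ hji => pcMax_update_le p i q hji

end Deviation

/-- In any max game the price of stability equals 1: there exists
a Nash-routing `p` whose social cost `SC(p) = max (C(p)) (D(p))` equals the
minimum of `SC(p')` over all routings `p'`. -/
theorem max_game_price_of_stability_one (R : RoutingGame V) :
    ∃ p : R.Routing, R.NashMax p ∧
      ∀ p' : R.Routing, R.IsRouting p' → R.SCMax p ≤ R.SCMax p' := by
  let rank : R.Routing → ℕ ×ₗ ℕ := fun p => toLex (R.SCMax p, R.potential p)
  have hne : {p : R.Routing | R.IsRouting p}.Nonempty :=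
    ⟨fun i => (R.strat_nonempty i).choose, fun i => (R.strat_nonempty i).choose_spec⟩
  set p := argminOn rank {p | R.IsRouting p} hne
  have hp : R.IsRouting p := argminOn_mem rank {p | R.IsRouting p} hne
  refine ⟨p, ⟨hp, fun i q hq => ?_⟩, fun p' hp' => ?_⟩
  · by_contra! hlt
    refine not_lt_argminOn rank {p | R.IsRouting p} (isRouting_update p i q hp hq)
      (Prod.Lex.toLex_lt_toLex.2 ?_)
    exact (SCMax_update_le p i q hlt).lt_or_eq.imp_right
      fun h => ⟨h, potential_update_lt p i q hlt⟩
  · rcases Prod.Lex.toLex_le_toLex.1 (argminOn_le rank {p | R.IsRouting p} hp') with h | h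
    exacts [h.le, h.1.le]

end RoutingGame
end

section
/- Let p be a Nash-routing of a max game on a graph with n ≥ 2 vertices and let p* be any routing. If C(p) ≥ D(p) + 2⌈log₂ n⌉ + 2, then C(p) ≤ 2·L·C(p*) + 2⌈log₂ n⌉. -/
/-!
Suppose `C(p) > 2 L C(p*) + 2⌈log₂ n⌉` and let `F_t` be the set of edges of congestion at
least `t` in `p`. For a threshold `t` above `2 L C(p*)`, a player whose path meets `F_{t+1}`
could switch to its path in `p*`, which is short (length `≤ L < t`); by the Nash property that
path must meet an edge that becomes `(t+1)`-congested after the switch, i.e. an edge of `F_t`.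
Double counting player–edge incidences then gives `(t + 1) |F_{t+1}| ≤ L C(p*) |F_t|`, so
`|F_t|` at least doubles at each of the `2⌈log₂ n⌉` steps from `t = C(p)` down. Since
`F_{C(p)}` is nonempty, the graph would have at least `4^⌈log₂ n⌉ ≥ n²` edges, which is
absurd.
-/

open Finset

namespace Nat

lemma choose_two_lt_two_pow_two_mul_clog (n : ℕ) : n.choose 2 < 2 ^ (2 * Nat.clog 2 n) :=
  calc n.choose 2 ≤ (2 ^ Nat.clog 2 n).choose 2 :=
        Nat.choose_le_choose 2 (Nat.le_pow_clog one_lt_two n)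
    _ < (2 ^ Nat.clog 2 n) ^ 2 := Nat.choose_lt_pow (by positivity) le_rfl
    _ = 2 ^ (2 * Nat.clog 2 n) := by rw [← pow_mul, mul_comm]

lemma two_pow_mul_le_of_two_mul_succ_le {f : ℕ → ℕ} {a m : ℕ}
    (h : ∀ t, a ≤ t → t < a + m → 2 * f (t + 1) ≤ f t) : 2 ^ m * f (a + m) ≤ f a := by
  induction m with
  | zero => simp
  | succ m ih =>
    calc 2 ^ (m + 1) * f (a + (m + 1)) = 2 ^ m * (2 * f (a + m + 1)) := by ring_nf
      _ ≤ 2 ^ m * f (a + m) := Nat.mul_le_mul_left _ (h _ (by omega) (by omega))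
      _ ≤ f a := ih fun t h₁ h₂ => h t h₁ (by omega)

end Nat

namespace RoutingGame

variable {V : Type} [Fintype V] [DecidableEq V] (R : RoutingGame V)

def congestedEdges (p : R.Routing) (t : ℕ) : Finset (Sym2 V) :=
  univ.filter fun e => t ≤ R.edgeCong p e

def users (p : R.Routing) (S : Finset (Sym2 V)) : Finset (Fin R.N) :=
  univ.filter fun i => ∃ e ∈ (p i).edges, e ∈ S

variable {R}

lemma edgeCong_update_le_s5 (p : R.Routing) (i : Fin R.N) (q : R.G.Walk (R.src i) (R.dst i))
    (e : Sym2 V) : R.edgeCong (Function.update p i q) e ≤ R.edgeCong p e + 1 := by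
  calc R.edgeCong (Function.update p i q) e
      ≤ #(insert i (univ.filter fun j => e ∈ (p j).edges)) := by
        refine card_le_card fun j hj => ?_
        rcases eq_or_ne j i with rfl | hji
        · exact mem_insert_self _ _
        · simp_all
    _ ≤ R.edgeCong p e + 1 := card_insert_le _ _

lemma edgeCong_le_netCong (p : R.Routing) (e : Sym2 V) : R.edgeCong p e ≤ R.netCong p :=
  le_sup (mem_univ e)

lemma edgeCong_le_pathCong {p : R.Routing} {i : Fin R.N} {e : Sym2 V} (he : e ∈ (p i).edges) :
    R.edgeCong p e ≤ R.pathCong p i :=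
  le_sup (List.mem_toFinset.mpr he)

lemma length_le_Lmax {i : Fin R.N} {q : R.G.Walk (R.src i) (R.dst i)} (hq : q ∈ R.strat i) :
    q.length ≤ R.Lmax :=
  (le_sup (f := fun q => q.length) hq).trans
    (le_sup (f := fun i => (R.strat i).sup fun q => q.length) (mem_univ i))

lemma one_le_netCong {p : R.Routing} (hp : R.IsRouting p) : 1 ≤ R.netCong p := by
  let i : Fin R.N := ⟨0, R.Npos⟩
  obtain ⟨e, he⟩ := List.exists_mem_of_length_pos
    ((R.strat_len i _ (hp i)).trans_eq (p i).length_edges.symm)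
  have : 1 ≤ R.edgeCong p e := one_le_card.mpr ⟨i, by simp [he]⟩
  exact this.trans (edgeCong_le_netCong p e)

lemma congestedEdges_netCong_nonempty {p : R.Routing} (hC : 0 < R.netCong p) :
    (R.congestedEdges p (R.netCong p)).Nonempty := by
  obtain ⟨e, -, he⟩ := (Finset.le_sup_iff hC).mp le_rfl
  exact ⟨e, mem_filter.mpr ⟨mem_univ e, he⟩⟩

lemma card_congestedEdges_le_choose_two (p : R.Routing) {t : ℕ} (ht : 0 < t) :
    #(R.congestedEdges p t) ≤ (Fintype.card V).choose 2 := by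
  classical
  refine (card_le_card fun e he => ?_).trans R.G.card_edgeFinset_le_card_choose_two
  obtain ⟨i, hi⟩ := one_le_card.mp (ht.trans_le (mem_filter.mp he).2)
  exact R.G.mem_edgeFinset.mpr ((p i).edges_subset_edgeSet (mem_filter.mp hi).2)

/-- Switching to `q` would leave player `i` with cost above `t`; as `q` is short, that cost is the
congestion of an edge of `q`, which the switch raised by at most one. -/
lemma exists_congested_edge_of_nashMax {p : R.Routing} (hp : R.NashMax p) {i : Fin R.N}
    {q : R.G.Walk (R.src i) (R.dst i)} (hq : q ∈ R.strat i) {t : ℕ} (hlen : q.length ≤ t)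
    (hcong : t < R.pathCong p i) : ∃ e ∈ q.edges, t ≤ R.edgeCong p e := by
  have hdev : t < R.pcMax (Function.update p i q) i :=
    hcong.trans_le ((le_max_left _ _).trans (hp.2 i q hq))
  have hdev' : t + 1 ≤ (q.edges.toFinset).sup (R.edgeCong (Function.update p i q)) := by
    simp only [pcMax, pathCong, Function.update_self, lt_max_iff] at hdev
    omega
  obtain ⟨e, he, hte⟩ := (Finset.le_sup_iff (Nat.succ_pos t)).mp hdev'
  exact ⟨e, List.mem_toFinset.mp he, by linarith [edgeCong_update_le_s5 p i q e]⟩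

lemma users_congestedEdges_succ_subset {p pstar : R.Routing} (hp : R.NashMax p)
    (hstar : R.IsRouting pstar) {t : ℕ} (ht : R.Lmax ≤ t) :
    R.users p (R.congestedEdges p (t + 1)) ⊆ R.users pstar (R.congestedEdges p t) := by
  intro i hi
  obtain ⟨e, he, heF⟩ := (mem_filter.mp hi).2
  have hcong : t < R.pathCong p i := (mem_filter.mp heF).2.trans (edgeCong_le_pathCong he)
  obtain ⟨e', he', hte'⟩ :=
    exists_congested_edge_of_nashMax hp (hstar i) ((length_le_Lmax (hstar i)).trans ht) hcong
  exact mem_filter.mpr ⟨mem_univ i, e', he', mem_filter.mpr ⟨mem_univ e', hte'⟩⟩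

lemma card_mul_le_card_users_mul_Lmax {p : R.Routing} (hp : R.IsRouting p)
    {S : Finset (Sym2 V)} {t : ℕ} (hS : ∀ e ∈ S, t ≤ R.edgeCong p e) :
    #S * t ≤ #(R.users p S) * R.Lmax := by
  refine card_mul_le_card_mul (fun e i => e ∈ (p i).edges) (fun e he => ?_) (fun i _ => ?_)
  · refine (hS e he).trans (card_le_card fun i hi => ?_)
    have hi : e ∈ (p i).edges := (mem_filter.mp hi).2
    exact (mem_bipartiteAbove _).mpr ⟨mem_filter.mpr ⟨mem_univ i, e, hi, he⟩, hi⟩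
  · calc #(S.bipartiteBelow (fun e i => e ∈ (p i).edges) i)
        ≤ #(p i).edges.toFinset :=
          card_le_card fun e he => List.mem_toFinset.mpr ((mem_bipartiteBelow _).mp he).2
      _ ≤ (p i).edges.length := List.toFinset_card_le _
      _ ≤ R.Lmax := (p i).length_edges.trans_le (length_le_Lmax (hp i))

lemma card_users_le_card_mul_netCong (p : R.Routing) (S : Finset (Sym2 V)) :
    #(R.users p S) ≤ #S * R.netCong p := by
  simpa using card_mul_le_card_mul' (fun e i => e ∈ (p i).edges) (m := R.netCong p) (n := 1)
    (fun i hi => by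
      obtain ⟨e, he, heS⟩ := (mem_filter.mp hi).2
      exact one_le_card.mpr ⟨e, (mem_bipartiteBelow _).mpr ⟨heS, he⟩⟩)
    (fun e _ => (card_le_card fun i hi => by
      simp only [mem_bipartiteAbove] at hi
      exact mem_filter.mpr ⟨mem_univ i, hi.2⟩).trans (edgeCong_le_netCong p e))

lemma two_mul_card_congestedEdges_succ_le {p pstar : R.Routing} (hp : R.NashMax p)
    (hstar : R.IsRouting pstar) {t : ℕ} (ht : 2 * R.Lmax * R.netCong pstar < t) :
    2 * #(R.congestedEdges p (t + 1)) ≤ #(R.congestedEdges p t) := by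
  set L := R.Lmax
  set Cs := R.netCong pstar
  have hCs := one_le_netCong hstar
  have hcount : #(R.congestedEdges p (t + 1)) * (t + 1) ≤ #(R.congestedEdges p t) * Cs * L :=
    calc #(R.congestedEdges p (t + 1)) * (t + 1)
        ≤ #(R.users p (R.congestedEdges p (t + 1))) * L :=
          card_mul_le_card_users_mul_Lmax hp.1 fun e he => (mem_filter.mp he).2
      _ ≤ #(R.users pstar (R.congestedEdges p t)) * L := Nat.mul_le_mul_right L
          (card_le_card (users_congestedEdges_succ_subset hp hstar (by nlinarith)))
      _ ≤ #(R.congestedEdges p t) * Cs * L :=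
          Nat.mul_le_mul_right L (card_users_le_card_mul_netCong pstar _)
  nlinarith

theorem max_congestion_upper_bound_general (R : RoutingGame V) (p pstar : R.Routing)
    (hp : R.NashMax p) (hstar : R.IsRouting pstar) :
    R.netCong p ≤ 2 * R.Lmax * R.netCong pstar +
      2 * Nat.clog 2 (Fintype.card V) := by
  set c := Nat.clog 2 (Fintype.card V)
  set C := R.netCong p
  by_contra! hC
  have hdouble : ∀ t, C - 2 * c ≤ t → t < C - 2 * c + 2 * c →
      2 * #(R.congestedEdges p (t + 1)) ≤ #(R.congestedEdges p t) := fun t ht _ =>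
    two_mul_card_congestedEdges_succ_le hp hstar (by omega)
  have hC_eq : C - 2 * c + 2 * c = C := by omega
  have hmany : 2 ^ (2 * c) ≤ (Fintype.card V).choose 2 :=
    calc 2 ^ (2 * c) ≤ 2 ^ (2 * c) * #(R.congestedEdges p C) :=
          Nat.le_mul_of_pos_right _ (congestedEdges_netCong_nonempty (by omega)).card_pos
      _ ≤ #(R.congestedEdges p (C - 2 * c)) := by
          simpa only [hC_eq] using
            Nat.two_pow_mul_le_of_two_mul_succ_le (f := fun t => #(R.congestedEdges p t)) hdouble
      _ ≤ (Fintype.card V).choose 2 := card_congestedEdges_le_choose_two p (by omega)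
  exact (Nat.choose_two_lt_two_pow_two_mul_clog _).not_ge hmany

/-- Let `p` be a Nash-routing of a max game on a graph with
`n ≥ 2` vertices and let `p*` be any routing.
If `C(p) ≥ D(p) + 2⌈log₂ n⌉ + 2`, then `C(p) ≤ 2·L·C(p*) + 2⌈log₂ n⌉`. -/
theorem max_congestion_upper_bound (R : RoutingGame V) (p pstar : R.Routing)
    (hp : R.NashMax p) (hstar : R.IsRouting pstar)
    (hn : 2 ≤ Fintype.card V)
    (hC : R.maxLen p + 2 * Nat.clog 2 (Fintype.card V) + 2 ≤ R.netCong p) :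
    R.netCong p ≤ 2 * R.Lmax * R.netCong pstar +
      2 * Nat.clog 2 (Fintype.card V) :=
  max_congestion_upper_bound_general R p pstar hp hstar

end RoutingGame
end

section
/- Let p be a Nash-routing of a sum-bucket game and let p* = (p*_1,…,p*_N) be any routing, with D̄* = D̄(p*). Then for every player i and every edge e ∈ p_i, there exists an edge e' ∈ p*_i with C̄_{e',p*_i}(p) ≥ C̄_{e,p_i}(p) − D̄*; that is, |f(e,i)| ≥ 1. -/
open Finset

namespace RoutingGame

variable {V : Type} [Fintype V] [DecidableEq V] (R : RoutingGame V)

/-- Player cost in the sum game: `pc_i(p) = C_i(p) + D_i(p)`. -/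
def pcSum (p : R.Routing) (i : Fin R.N) : ℕ :=
  R.pathCong p i + (p i).length

/-- For a bucket index `b`, the number of players whose path uses edge `e`
and belongs to bucket `b` (the bucket of a path `q` is `⌊log₂ |q|⌋`). -/
def nCongB (p : R.Routing) (b : ℕ) (e : Sym2 V) : ℕ :=
  (Finset.univ.filter fun j => e ∈ (p j).edges ∧ Nat.log 2 (p j).length = b).card

/-- The normalized congestion `C̄_i(p)` of player `i`: the maximum, over the
edges of `p_i`, of the congestion caused by paths in the bucket of `p_i`. -/
def nCong (p : R.Routing) (i : Fin R.N) : ℕ :=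
  (p i).edges.toFinset.sup (R.nCongB p (Nat.log 2 (p i).length))

/-- The normalized length `D̄_i(p) = 2 ^ (B(p_i) + 1) - 1` of player `i`. -/
def nLen (p : R.Routing) (i : Fin R.N) : ℕ :=
  2 ^ (Nat.log 2 (p i).length + 1) - 1

/-- Player cost in the sum-bucket game: `pc_i(p) = C̄_i(p) + D̄_i(p)`. -/
def pcSB (p : R.Routing) (i : Fin R.N) : ℕ := R.nCong p i + R.nLen p i

/-- The normalized congestion `C̄(p)` of a routing. -/
def nC (p : R.Routing) : ℕ := Finset.univ.sup (R.nCong p)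

/-- The normalized length `D̄(p)` of a routing. -/
def nD (p : R.Routing) : ℕ := Finset.univ.sup (R.nLen p)

/-- The normalized edge congestion `C̄_e(p) = max_i C̄_{e,p_i}(p)`. -/
def nCe (p : R.Routing) (e : Sym2 V) : ℕ :=
  Finset.univ.sup fun i => R.nCongB p (Nat.log 2 (p i).length) e

/-- Social cost in the sum-bucket game: `SC(p) = C̄(p) + D̄(p)`. -/
def SCSB (p : R.Routing) : ℕ := R.nC p + R.nD p

/-- A Nash-routing of the sum-bucket game: a routing in which every player is
locally optimal. -/
def NashSB (p : R.Routing) : Prop :=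
  R.IsRouting p ∧
    ∀ i, ∀ q ∈ R.strat i, R.pcSB p i ≤ R.pcSB (Function.update p i q) i

/-- A greedy move in the sum-bucket game takes `p` to `p'` by letting a single
player switch to a strictly cheaper path in its strategy set. -/
def GreedyMoveSB (p p' : R.Routing) : Prop :=
  ∃ i, ∃ q ∈ R.strat i,
    p' = Function.update p i q ∧ R.pcSB p' i < R.pcSB p i

/-- The entry `m_j(p)` of the routing vector of the sum-bucket game: the number
of players whose cost equals `j`. -/
def mvecSB (p : R.Routing) (j : ℕ) : ℕ :=
  (Finset.univ.filter fun i => R.pcSB p i = j).card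

/-- The strict order on routing vectors (sum-bucket game): `M(p') < M(p)` iff
the vectors agree above some index `j` and the entry of `p'` at `j` is smaller. -/
def MLtSB (p' p : R.Routing) : Prop :=
  ∃ j : ℕ, (∀ k, j < k → R.mvecSB p' k = R.mvecSB p k) ∧
    R.mvecSB p' j < R.mvecSB p j

theorem nCongB_le_nCong (p : R.Routing) {i : Fin R.N} {e : Sym2 V} (he : e ∈ (p i).edges) :
    R.nCongB p (Nat.log 2 (p i).length) e ≤ R.nCong p i :=
  Finset.le_sup (List.mem_toFinset.mpr he)

theorem exists_mem_edges_nCong_eq (p : R.Routing) (i : Fin R.N) (hlen : 0 < (p i).length) :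
    ∃ e ∈ (p i).edges, R.nCong p i = R.nCongB p (Nat.log 2 (p i).length) e := by
  have hne : (p i).edges.toFinset.Nonempty := by
    rw [List.toFinset_nonempty_iff, ← List.length_pos_iff, SimpleGraph.Walk.length_edges]
    exact hlen
  obtain ⟨e, he, hsup⟩ := Finset.exists_mem_eq_sup _ hne (R.nCongB p (Nat.log 2 (p i).length))
  exact ⟨e, List.mem_toFinset.mp he, hsup⟩

theorem nCongB_update_le (p : R.Routing) (i : Fin R.N) (q : R.G.Walk (R.src i) (R.dst i))
    (b : ℕ) (e : Sym2 V) :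
    R.nCongB (Function.update p i q) b e ≤ R.nCongB p b e + 1 := by
  unfold nCongB
  refine (Finset.card_le_card ?_).trans (Finset.card_insert_le i _)
  intro j hj
  rcases eq_or_ne j i with rfl | hji
  · exact Finset.mem_insert_self _ _
  · simp only [Finset.mem_filter, Finset.mem_univ, true_and, Function.update_of_ne hji] at hj
    exact Finset.mem_insert_of_mem (by simpa using hj)

theorem one_le_nLen (p : R.Routing) (i : Fin R.N) : 1 ≤ R.nLen p i :=
  Nat.le_sub_one_of_lt (Nat.one_lt_two_pow (Nat.succ_ne_zero _))

theorem nLen_le_nD (p : R.Routing) (i : Fin R.N) : R.nLen p i ≤ R.nD p :=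
  Finset.le_sup (Finset.mem_univ i)

theorem nLen_update_self (p : R.Routing) (i : Fin R.N) (q : R.G.Walk (R.src i) (R.dst i)) :
    R.nLen (Function.update p i q) i = 2 ^ (Nat.log 2 q.length + 1) - 1 := by
  simp only [nLen, Function.update_self]

theorem exists_mem_edges_nCong_update_self_le (p : R.Routing) (i : Fin R.N)
    (q : R.G.Walk (R.src i) (R.dst i)) (hq : 0 < q.length) :
    ∃ e ∈ q.edges,
      R.nCong (Function.update p i q) i ≤ R.nCongB p (Nat.log 2 q.length) e + 1 := by
  have hlen : 0 < (Function.update p i q i).length := by rwa [Function.update_self]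
  obtain ⟨e, he, hmax⟩ := R.exists_mem_edges_nCong_eq (Function.update p i q) i hlen
  rw [Function.update_self] at he hmax
  exact ⟨e, he, hmax ▸ R.nCongB_update_le p i q _ e⟩

/- Deviating to `p*_i` is unprofitable for `i`. Its cost there is at most
`C̄_{e',p*_i}(p) + 1 + D̄*` for the most congested edge `e'` of `p*_i` (the `+ 1` is `i`
itself), while its current cost is at least `C̄_{e,p_i}(p) + 1`. -/
/-- Let `p` be a Nash-routing of a sum-bucket game and let `p*`
be any routing, with `D̄* = D̄(p*)`.  Then for every player `i` and every edge
`e ∈ p_i`, there exists an edge `e' ∈ p*_i` with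
`C̄_{e',p*_i}(p) ≥ C̄_{e,p_i}(p) − D̄*`; that is, `|f(e,i)| ≥ 1`. -/
theorem sum_bucket_f_nonempty (R : RoutingGame V) (p pstar : R.Routing)
    (hp : R.NashSB p) (hstar : R.IsRouting pstar)
    (i : Fin R.N) (e : Sym2 V) (he : e ∈ (p i).edges) :
    ∃ e' ∈ (pstar i).edges,
      R.nCongB p (Nat.log 2 (p i).length) e ≤
        R.nCongB p (Nat.log 2 (pstar i).length) e' + R.nD pstar := by
  obtain ⟨e', he', hdev_cong⟩ := R.exists_mem_edges_nCong_update_self_le p i (pstar i)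
    (R.strat_len i _ (hstar i))
  refine ⟨e', he', ?_⟩
  have hdev : R.pcSB p i ≤ R.pcSB (Function.update p i (pstar i)) i :=
    hp.2 i (pstar i) (hstar i)
  have hdev_len : R.nLen (Function.update p i (pstar i)) i ≤ R.nD pstar :=
    R.nLen_update_self p i (pstar i) ▸ R.nLen_le_nD pstar i
  have hcong := R.nCongB_le_nCong p he
  have hlen := R.one_le_nLen p i
  unfold pcSB at hdev
  omega

end RoutingGame
end
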